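/- arXiv:2401.00945 — 5 statements merged into one kernel-verified Lean document; each statement's English description precedes it below -/
import Mathlib

section
/- Let θ, θ' ∈ Θ and assume Q(θ'|θ) and Q(θ|θ) are finite. Then ℓ(θ') − ℓ(θ) = Q(θ'|θ) − Q(θ|θ) + KL(θ → θ'), where KL(θ → θ') = ∫ log( f_m(θ, x) / f_m(θ', x) ) · f_m(θ, x) dμ(x) is the Kullback–Leibler divergence from the missing-data distribution at θ to the missing-data distribution at θ'. -/
open MeasureTheory Real Filter

/-- Fundamental EM decomposition: ℓ(θ') − ℓ(θ) = Q(θ'|θ) − Q(θ|θ) + KL(θ → θ'),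
where KL(θ → θ') = ∫ log(f_m(θ,x)/f_m(θ',x)) f_m(θ,x) dμ(x). -/
theorem em_kl_decomposition
    {𝒳 : Type*} [MeasurableSpace 𝒳] (μ : Measure 𝒳) [SigmaFinite μ]
    {Θ : Type*} (f_c : Θ → 𝒳 → ℝ)
    (hpos : ∀ θ x, 0 < f_c θ x)
    (hmeas : ∀ θ, Measurable (f_c θ))
    (hint : ∀ θ, Integrable (f_c θ) μ)
    (L : Θ → ℝ) (hL : ∀ θ, L θ = ∫ x, f_c θ x ∂μ)
    (hLpos : ∀ θ, 0 < L θ)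
    (ell : Θ → ℝ) (hell : ∀ θ, ell θ = Real.log (L θ))
    (f_m : Θ → 𝒳 → ℝ) (hfm : ∀ θ x, f_m θ x = f_c θ x / L θ)
    (Q : Θ → Θ → ℝ) (hQ : ∀ θ' θ, Q θ' θ = ∫ x, Real.log (f_c θ' x) * f_m θ x ∂μ)
    (θ θ' : Θ)
    (hQ1 : Integrable (fun x => Real.log (f_c θ' x) * f_m θ x) μ)
    (hQ2 : Integrable (fun x => Real.log (f_c θ x) * f_m θ x) μ) :
    ell θ' - ell θ =
      Q θ' θ - Q θ θ + ∫ x, Real.log (f_m θ x / f_m θ' x) * f_m θ x ∂μ := by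
  have hfmeq : f_m θ = fun x => f_c θ x / L θ := funext fun x => hfm θ x
  have hfmint : Integrable (f_m θ) μ := by
    rw [hfmeq]; exact (hint θ).div_const _
  have hfm1 : ∫ x, f_m θ x ∂μ = 1 := by
    rw [hfmeq, integral_div, ← hL θ]
    field_simp [(hLpos θ).ne']
  have hlogeq : ∀ x, Real.log (f_m θ x / f_m θ' x) =
      (Real.log (f_c θ x) - Real.log (f_c θ' x)) +
        (Real.log (L θ') - Real.log (L θ)) := by
    intro x
    rw [hfm, hfm,
      Real.log_div (div_pos (hpos θ x) (hLpos θ)).ne'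
        (div_pos (hpos θ' x) (hLpos θ')).ne',
      Real.log_div (hpos θ x).ne' (hLpos θ).ne',
      Real.log_div (hpos θ' x).ne' (hLpos θ').ne']
    ring
  have key : ∫ x, Real.log (f_m θ x / f_m θ' x) * f_m θ x ∂μ =
      (∫ x, Real.log (f_c θ x) * f_m θ x ∂μ)
        - (∫ x, Real.log (f_c θ' x) * f_m θ x ∂μ)
        + (Real.log (L θ') - Real.log (L θ)) * ∫ x, f_m θ x ∂μ := by
    rw [← MeasureTheory.integral_const_mul _ _, ← integral_sub hQ2 hQ1, ← integral_add]
    · congr 1; ext x; rw [hlogeq x]; ring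
    · exact hQ2.sub hQ1
    · exact hfmint.const_mul _
  rw [hell, hell, hQ, hQ, key, ← hQ θ θ, ← hQ θ' θ, hfm1]
  ring
end

section
/- Let θ, θ' ∈ Θ and assume Q(θ'|θ) and Q(θ|θ) are finite. Then ℓ(θ') − ℓ(θ) ≥ Q(θ'|θ) − Q(θ|θ). -/
open MeasureTheory Real Filter

/-- ℓ(θ´) − ℓ(θ) ≥ Q(θ´|θ) − Q(θ|θ). -/
theorem em_lower_bound
    {𝒳 : Type*} [MeasurableSpace 𝒳] (μ : Measure 𝒳) [SigmaFinite μ]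
    {Θ : Type*} (f_c : Θ → 𝒳 → ℝ)
    (hpos : ∀ θ x, 0 < f_c θ x)
    (hmeas : ∀ θ, Measurable (f_c θ))
    (hint : ∀ θ, Integrable (f_c θ) μ)
    (L : Θ → ℝ) (hL : ∀ θ, L θ = ∫ x, f_c θ x ∂μ)
    (hLpos : ∀ θ, 0 < L θ)
    (ell : Θ → ℝ) (hell : ∀ θ, ell θ = Real.log (L θ))
    (f_m : Θ → 𝒳 → ℝ) (hfm : ∀ θ x, f_m θ x = f_c θ x / L θ)
    (Q : Θ → Θ → ℝ) (hQ : ∀ θ' θ, Q θ' θ = ∫ x, Real.log (f_c θ' x) * f_m θ x ∂μ)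
    (θ θ' : Θ)
    (hQ1 : Integrable (fun x => Real.log (f_c θ' x) * f_m θ x) μ)
    (hQ2 : Integrable (fun x => Real.log (f_c θ x) * f_m θ x) μ)
    :
    ell θ' - ell θ ≥ Q θ' θ - Q θ θ := by
  -- f_m θ is integrable with integral 1
  have hfm_int : ∀ t : Θ, Integrable (f_m t) μ := by
    intro t
    have : Integrable (fun x => f_c t x / L t) μ := (hint t).div_const _
    exact this.congr (Filter.Eventually.of_forall fun x => (hfm t x).symm)
  have hfm_pos : ∀ t x, 0 < f_m t x := fun t x => by
    rw [hfm]; exact div_pos (hpos t x) (hLpos t)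
  have hfm_integral : ∀ t : Θ, ∫ x, f_m t x ∂μ = 1 := by
    intro t
    have : ∫ x, f_m t x ∂μ = ∫ x, f_c t x / L t ∂μ := by
      congr 1; ext x; rw [hfm]
    rw [this, integral_div, ← hL, div_self (hLpos t).ne']
  -- the key function
  set g : 𝒳 → ℝ := fun x =>
    (Real.log (L θ') - Real.log (L θ) - Real.log (f_c θ' x) + Real.log (f_c θ x)) * f_m θ x
    with hg
  have hg_int : Integrable g μ := by
    have h1 : Integrable (fun x => (Real.log (L θ') - Real.log (L θ)) * f_m θ x) μ :=
      (hfm_int θ).const_mul _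
    have : Integrable (fun x =>
        (Real.log (L θ') - Real.log (L θ)) * f_m θ x
        - Real.log (f_c θ' x) * f_m θ x + Real.log (f_c θ x) * f_m θ x) μ :=
      (h1.sub hQ1).add hQ2
    exact this.congr (Filter.Eventually.of_forall fun x => by ring)
  -- pointwise lower bound
  have hpt : ∀ x, f_m θ x - f_m θ' x ≤ g x := by
    intro x
    have ht : (0:ℝ) < f_m θ' x / f_m θ x := div_pos (hfm_pos θ' x) (hfm_pos θ x)
    have hlog := Real.log_le_sub_one_of_pos ht
    have hb : Real.log (L θ') - Real.log (L θ) - Real.log (f_c θ' x) + Real.log (f_c θ x)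
        = -Real.log (f_m θ' x / f_m θ x) := by
      rw [Real.log_div (hfm_pos θ' x).ne' (hfm_pos θ x).ne', hfm, hfm,
        Real.log_div (hpos θ' x).ne' (hLpos θ').ne',
        Real.log_div (hpos θ x).ne' (hLpos θ).ne']
      ring
    have h2 : 1 - f_m θ' x / f_m θ x ≤ -Real.log (f_m θ' x / f_m θ x) := by linarith
    have h3 : (1 - f_m θ' x / f_m θ x) * f_m θ x ≤
        -Real.log (f_m θ' x / f_m θ x) * f_m θ x :=
      mul_le_mul_of_nonneg_right h2 (hfm_pos θ x).le
    have h4 : (1 - f_m θ' x / f_m θ x) * f_m θ x = f_m θ x - f_m θ' x := by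
      rw [sub_mul, one_mul, div_mul_cancel₀ _ (hfm_pos θ x).ne']
    show f_m θ x - f_m θ' x ≤
      (Real.log (L θ') - Real.log (L θ) - Real.log (f_c θ' x) + Real.log (f_c θ x)) * f_m θ x
    rw [hb]
    linarith [h3, h4]
  -- integrate
  have hint_sub : Integrable (fun x => f_m θ x - f_m θ' x) μ :=
    (hfm_int θ).sub (hfm_int θ')
  have hInt : ∫ x, (f_m θ x - f_m θ' x) ∂μ ≤ ∫ x, g x ∂μ :=
    integral_mono hint_sub hg_int hpt
  have hzero : ∫ x, (f_m θ x - f_m θ' x) ∂μ = 0 := by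
    rw [integral_sub (hfm_int θ) (hfm_int θ'), hfm_integral, hfm_integral, sub_self]
  -- expand ∫ g
  have hgI : ∫ x, g x ∂μ
      = (Real.log (L θ') - Real.log (L θ)) - (Q θ' θ - Q θ θ) := by
    have hexp : ∀ x, g x = (Real.log (L θ') - Real.log (L θ)) * f_m θ x
        - Real.log (f_c θ' x) * f_m θ x + Real.log (f_c θ x) * f_m θ x := by
      intro x; rw [hg]; ring
    have hA : Integrable (fun x => (Real.log (L θ') - Real.log (L θ)) * f_m θ x
        - Real.log (f_c θ' x) * f_m θ x) μ := ((hfm_int θ).const_mul _).sub hQ1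
    have hB : Integrable (fun x => (Real.log (L θ') - Real.log (L θ)) * f_m θ x) μ :=
      (hfm_int θ).const_mul _
    rw [integral_congr_ae (Filter.Eventually.of_forall hexp),
      integral_add hA hQ2, integral_sub hB hQ1,
      integral_const_mul, hfm_integral, hQ, hQ]
    ring
  rw [hell, hell, ge_iff_le]
  rw [hzero] at hInt
  rw [hgI] at hInt
  linarith
end

section
/- (Ascent property of the EM and generalized EM algorithm.) Let θ, θ' ∈ Θ with Q(θ'|θ) and Q(θ|θ) finite. If Q(θ'|θ) ≥ Q(θ|θ), then ℓ(θ') ≥ ℓ(θ). In particular, if θ' maximizes the EM objective Q(·|θ) over Θ, then the EM update never decreases the observed-data log-likelihood: ℓ(θ') ≥ ℓ(θ). -/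
open MeasureTheory Real Filter

/-- Ascent property of the (generalized) EM algorithm: if Q(θ´|θ) ≥ Q(θ|θ) then
ℓ(θ´) ≥ ℓ(θ); in particular this holds if θ´ maximizes Q(·|θ) over Θ. -/
theorem em_ascent_property
    {𝒳 : Type*} [MeasurableSpace 𝒳] (μ : Measure 𝒳) [SigmaFinite μ]
    {Θ : Type*} (f_c : Θ → 𝒳 → ℝ)
    (hpos : ∀ θ x, 0 < f_c θ x)
    (hmeas : ∀ θ, Measurable (f_c θ))
    (hint : ∀ θ, Integrable (f_c θ) μ)
    (L : Θ → ℝ) (hL : ∀ θ, L θ = ∫ x, f_c θ x ∂μ)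
    (hLpos : ∀ θ, 0 < L θ)
    (ell : Θ → ℝ) (hell : ∀ θ, ell θ = Real.log (L θ))
    (f_m : Θ → 𝒳 → ℝ) (hfm : ∀ θ x, f_m θ x = f_c θ x / L θ)
    (Q : Θ → Θ → ℝ) (hQ : ∀ θ' θ, Q θ' θ = ∫ x, Real.log (f_c θ' x) * f_m θ x ∂μ)
    (θ θ' : Θ)
    (hQ1 : Integrable (fun x => Real.log (f_c θ' x) * f_m θ x) μ)
    (hQ2 : Integrable (fun x => Real.log (f_c θ x) * f_m θ x) μ)
    :
    (Q θ' θ ≥ Q θ θ → ell θ' ≥ ell θ) ∧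
    ((∀ t : Θ, Q t θ ≤ Q θ' θ) → ell θ' ≥ ell θ) := by
  -- integrability of the missing-data densities
  have hfm_int : ∀ t : Θ, Integrable (f_m t) μ := by
    intro t
    have : f_m t = fun x => f_c t x / L t := funext (hfm t)
    rw [this]
    exact (hint t).div_const _
  have hfm_pos : ∀ t x, 0 < f_m t x := by
    intro t x
    rw [hfm]
    exact div_pos (hpos t x) (hLpos t)
  -- ∫ f_m t = 1
  have hfm_one : ∀ t : Θ, ∫ x, f_m t x ∂μ = 1 := by
    intro t
    have : f_m t = fun x => f_c t x / L t := funext (hfm t)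
    rw [this, integral_div, ← hL, div_self (hLpos t).ne']
  -- the key inequality: ℓθ' - ℓθ ≥ Qθ'θ - Qθθ
  have key : ell θ' - ell θ ≥ Q θ' θ - Q θ θ := by
    have hint1 : Integrable (fun x =>
        Real.log (f_c θ' x) * f_m θ x - Real.log (f_c θ x) * f_m θ x
          + (Real.log (L θ) - Real.log (L θ')) * f_m θ x) μ :=
      (hQ1.sub hQ2).add ((hfm_int θ).const_mul _)
    have hint2 : Integrable (fun x => f_m θ' x - f_m θ x) μ :=
      (hfm_int θ').sub (hfm_int θ)
    have hptw : ∀ x,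
        Real.log (f_c θ' x) * f_m θ x - Real.log (f_c θ x) * f_m θ x
          + (Real.log (L θ) - Real.log (L θ')) * f_m θ x
        ≤ f_m θ' x - f_m θ x := by
      intro x
      have h1 := hfm_pos θ x
      have h2 := hfm_pos θ' x
      have hlog : Real.log (f_m θ' x / f_m θ x) ≤ f_m θ' x / f_m θ x - 1 :=
        Real.log_le_sub_one_of_pos (div_pos h2 h1)
      have hmul := mul_le_mul_of_nonneg_right hlog h1.le
      have e1 : Real.log (f_m θ' x / f_m θ x) * f_m θ x =
          Real.log (f_c θ' x) * f_m θ x - Real.log (f_c θ x) * f_m θ x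
            + (Real.log (L θ) - Real.log (L θ')) * f_m θ x := by
        rw [Real.log_div h2.ne' h1.ne', hfm θ' x, hfm θ x,
          Real.log_div (hpos θ' x).ne' (hLpos θ').ne',
          Real.log_div (hpos θ x).ne' (hLpos θ).ne']
        ring
      have e2 : (f_m θ' x / f_m θ x - 1) * f_m θ x = f_m θ' x - f_m θ x := by
        field_simp
      rw [e1, e2] at hmul
      exact hmul
    have hmono := integral_mono hint1 hint2 hptw
    have hLHS : ∫ x, (Real.log (f_c θ' x) * f_m θ x - Real.log (f_c θ x) * f_m θ x
          + (Real.log (L θ) - Real.log (L θ')) * f_m θ x) ∂μ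
        = Q θ' θ - Q θ θ + (Real.log (L θ) - Real.log (L θ')) := by
      have hsub : Integrable
          (fun x => Real.log (f_c θ' x) * f_m θ x - Real.log (f_c θ x) * f_m θ x) μ :=
        hQ1.sub hQ2
      have hcm : Integrable (fun x => (Real.log (L θ) - Real.log (L θ')) * f_m θ x) μ :=
        (hfm_int θ).const_mul _
      rw [integral_add hsub hcm, integral_sub hQ1 hQ2, MeasureTheory.integral_const_mul, hfm_one θ, hQ, hQ]
      ring
    have hRHS : ∫ x, (f_m θ' x - f_m θ x) ∂μ = 0 := by
      rw [integral_sub (hfm_int θ') (hfm_int θ), hfm_one, hfm_one]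
      ring
    rw [hLHS, hRHS] at hmono
    rw [hell, hell]
    linarith
  constructor
  · intro h; linarith
  · intro h
    have := h θ
    linarith
end

section
/- (Strict ascent.) Let θ, θ' ∈ Θ with Q(θ'|θ) and Q(θ|θ) finite, and suppose the missing-data densities at θ and θ' differ on a set of positive measure, i.e., μ({x ∈ 𝒳 : f_m(θ, x) ≠ f_m(θ', x)}) > 0. Then ℓ(θ') − ℓ(θ) > Q(θ'|θ) − Q(θ|θ); in particular, if additionally Q(θ'|θ) ≥ Q(θ|θ), then ℓ(θ') > ℓ(θ). -/
open MeasureTheory Real Filter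

/-!
Since `log t ≤ t - 1` with equality only at `t = 1`, the function `q - p - p log (q / p)` is
nonnegative for positive `p, q` and vanishes only where `p = q`; integrating it against two
probability densities gives the strict Gibbs inequality `∫ p log (q / p) < 0` when `p ≠ q` on a
set of positive measure. For the missing-data densities `p = f_m θ`, `q = f_m θ'`, dividing
out the normalisations shows `∫ p log (q / p) = Q(θ'|θ) - Q(θ|θ) - (ℓ(θ') - ℓ(θ))`.
-/

lemma mul_log_div_le_sub {p q : ℝ} (hp : 0 < p) (hq : 0 < q) : p * log (q / p) ≤ q - p :=
  calc p * log (q / p) ≤ p * (q / p - 1) :=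
        mul_le_mul_of_nonneg_left (log_le_sub_one_of_pos (div_pos hq hp)) hp.le
    _ = q - p := by field_simp

lemma mul_log_div_lt_sub {p q : ℝ} (hp : 0 < p) (hq : 0 < q) (hpq : p ≠ q) :
    p * log (q / p) < q - p :=
  calc p * log (q / p) < p * (q / p - 1) := by
        refine mul_lt_mul_of_pos_left (log_lt_sub_one_of_pos (div_pos hq hp) ?_) hp
        rwa [ne_eq, div_eq_one_iff_eq hp.ne', eq_comm]
    _ = q - p := by field_simp

lemma integral_mul_log_div_lt_integral_sub {α : Type*} [MeasurableSpace α] {μ : Measure α}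
    {p q : α → ℝ} (hp : ∀ x, 0 < p x) (hq : ∀ x, 0 < q x)
    (hp_int : Integrable p μ) (hq_int : Integrable q μ)
    (hlog_int : Integrable (fun x => p x * log (q x / p x)) μ)
    (hpq : 0 < μ {x | p x ≠ q x}) :
    ∫ x, p x * log (q x / p x) ∂μ < (∫ x, q x ∂μ) - ∫ x, p x ∂μ := by
  have hsub_int : Integrable (fun x => q x - p x) μ := hq_int.sub hp_int
  have h_int : Integrable (fun x => q x - p x - p x * log (q x / p x)) μ := hsub_int.sub hlog_int
  have h_pos : 0 < ∫ x, q x - p x - p x * log (q x / p x) ∂μ := by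
    refine (integral_pos_iff_support_of_nonneg (fun x => ?_) h_int).2 (hpq.trans_le ?_)
    · exact sub_nonneg.2 (mul_log_div_le_sub (hp x) (hq x))
    · exact measure_mono fun x hx => (sub_pos.2 (mul_log_div_lt_sub (hp x) (hq x) hx)).ne'
  rw [integral_sub hsub_int hlog_int, integral_sub hq_int hp_int] at h_pos
  linarith

theorem em_strict_ascent_general
    {𝒳 : Type*} [MeasurableSpace 𝒳] (μ : Measure 𝒳)
    {Θ : Type*} (f_c : Θ → 𝒳 → ℝ)
    (hpos : ∀ θ x, 0 < f_c θ x)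
    (hint : ∀ θ, Integrable (f_c θ) μ)
    (L : Θ → ℝ) (hL : ∀ θ, L θ = ∫ x, f_c θ x ∂μ)
    (hLpos : ∀ θ, 0 < L θ)
    (ell : Θ → ℝ) (hell : ∀ θ, ell θ = Real.log (L θ))
    (f_m : Θ → 𝒳 → ℝ) (hfm : ∀ θ x, f_m θ x = f_c θ x / L θ)
    (Q : Θ → Θ → ℝ) (hQ : ∀ θ' θ, Q θ' θ = ∫ x, Real.log (f_c θ' x) * f_m θ x ∂μ)
    (θ θ' : Θ)
    (hQ1 : Integrable (fun x => Real.log (f_c θ' x) * f_m θ x) μ)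
    (hQ2 : Integrable (fun x => Real.log (f_c θ x) * f_m θ x) μ)
    (hdiff : 0 < μ {x | f_m θ x ≠ f_m θ' x}) :
    ell θ' - ell θ > Q θ' θ - Q θ θ ∧
    (Q θ' θ ≥ Q θ θ → ell θ' > ell θ) := by
  have hfm_eq : ∀ θ, f_m θ = fun x => f_c θ x / L θ := fun θ => funext (hfm θ)
  have hfm_pos : ∀ θ x, 0 < f_m θ x := fun θ x => (hfm θ x).symm ▸ div_pos (hpos θ x) (hLpos θ)
  have hfm_int : ∀ θ, Integrable (f_m θ) μ := fun θ => hfm_eq θ ▸ (hint θ).div_const _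
  have hfm_total : ∀ θ, ∫ x, f_m θ x ∂μ = 1 := fun θ => by
    rw [hfm_eq, integral_div, ← hL, div_self (hLpos θ).ne']
  have hlog_ratio : (fun x => f_m θ x * log (f_m θ' x / f_m θ x)) = fun x =>
      (log (f_c θ' x) * f_m θ x - log (f_c θ x) * f_m θ x) - (ell θ' - ell θ) * f_m θ x := by
    funext x
    rw [log_div (hfm_pos θ' x).ne' (hfm_pos θ x).ne', hfm θ' x, hfm θ x, hell, hell,
      log_div (hpos θ' x).ne' (hLpos θ').ne', log_div (hpos θ x).ne' (hLpos θ).ne']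
    ring
  have hQ_diff_int : Integrable (fun x => log (f_c θ' x) * f_m θ x - log (f_c θ x) * f_m θ x) μ :=
    hQ1.sub hQ2
  have hshift_int : Integrable (fun x => (ell θ' - ell θ) * f_m θ x) μ :=
    (hfm_int θ).const_mul _
  have hgibbs := integral_mul_log_div_lt_integral_sub (hfm_pos θ) (hfm_pos θ') (hfm_int θ)
    (hfm_int θ') (hlog_ratio ▸ hQ_diff_int.sub hshift_int) hdiff
  rw [hlog_ratio, integral_sub hQ_diff_int hshift_int, integral_sub hQ1 hQ2, integral_const_mul,
    hfm_total, hfm_total, ← hQ, ← hQ] at hgibbs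
  exact ⟨by linarith, fun _ => by linarith⟩

/-- Strict ascent: if the missing-data densities at θ and θ´ differ on a set of
positive measure then ℓ(θ´) − ℓ(θ) > Q(θ´|θ) − Q(θ|θ); in particular, if also
Q(θ´|θ) ≥ Q(θ|θ) then ℓ(θ´) > ℓ(θ). -/
theorem em_strict_ascent
    {𝒳 : Type*} [MeasurableSpace 𝒳] (μ : Measure 𝒳) [SigmaFinite μ]
    {Θ : Type*} (f_c : Θ → 𝒳 → ℝ)
    (hpos : ∀ θ x, 0 < f_c θ x)
    (hmeas : ∀ θ, Measurable (f_c θ))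
    (hint : ∀ θ, Integrable (f_c θ) μ)
    (L : Θ → ℝ) (hL : ∀ θ, L θ = ∫ x, f_c θ x ∂μ)
    (hLpos : ∀ θ, 0 < L θ)
    (ell : Θ → ℝ) (hell : ∀ θ, ell θ = Real.log (L θ))
    (f_m : Θ → 𝒳 → ℝ) (hfm : ∀ θ x, f_m θ x = f_c θ x / L θ)
    (Q : Θ → Θ → ℝ) (hQ : ∀ θ' θ, Q θ' θ = ∫ x, Real.log (f_c θ' x) * f_m θ x ∂μ)
    (θ θ' : Θ)
    (hQ1 : Integrable (fun x => Real.log (f_c θ' x) * f_m θ x) μ)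
    (hQ2 : Integrable (fun x => Real.log (f_c θ x) * f_m θ x) μ)
    (hdiff : 0 < μ {x | f_m θ x ≠ f_m θ' x}) :
    ell θ' - ell θ > Q θ' θ - Q θ θ ∧
    (Q θ' θ ≥ Q θ θ → ell θ' > ell θ) :=
  em_strict_ascent_general μ f_c hpos hint L hL hLpos ell hell f_m hfm Q hQ θ θ' hQ1 hQ2 hdiff
end

section
/- (Fixed points of EM are stationary points of the observed-data log-likelihood.) Suppose θ* ∈ Θ is such that the map θ' ↦ Q(θ'|θ*) is differentiable at θ* with ∇_{θ'} Q(θ'|θ*)|_{θ'=θ*} = 0 — in particular this holds if θ* is an interior maximizer of Q(·|θ*), i.e., a fixed point of the EM update. Then θ* is a critical point of the observed-data log-likelihood: ∇ℓ(θ*) = 0. -/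
/-!
Fisher's identity: since `∇ log f_c = ∇ f_c / f_c`, the EM gradient at `θ*` is
`∫ (f_c / L) • (∇ f_c / f_c) = (∫ ∇ f_c) / L = ∇ L / L = ∇ ℓ(θ*)`,
so `∇_{θ'} Q(θ'|θ*)` vanishing at `θ*` is the same as `∇ ℓ(θ*) = 0`.
-/

open MeasureTheory Real Filter Topology

theorem gradient_log_of_eventually_pos {E : Type*} [NormedAddCommGroup E] [InnerProductSpace ℝ E]
    [CompleteSpace E] {g : E → ℝ} {x : E} (hg : ∀ᶠ y in 𝓝 x, 0 < g y) :
    gradient (fun y => log (g y)) x = (g x)⁻¹ • gradient g x := by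
  by_cases hdiff : DifferentiableAt ℝ g x
  · refine HasGradientAt.gradient (hasGradientAt_iff_hasFDerivAt.mpr ?_)
    simpa using hdiff.hasGradientAt.hasFDerivAt.log hg.self_of_nhds.ne'
  · -- `g = exp ∘ log ∘ g` near `x`, so both gradients take the junk value `0`.
    have hlog : ¬DifferentiableAt ℝ (fun y => log (g y)) x := fun hlog =>
      hdiff <| hlog.exp.congr_of_eventuallyEq <| hg.mono fun y hy => (exp_log hy).symm
    rw [gradient_eq_zero_of_not_differentiableAt hdiff,
      gradient_eq_zero_of_not_differentiableAt hlog, smul_zero]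

theorem gradient_log_eq_integral_div_smul_gradient_log {E : Type*} [NormedAddCommGroup E]
    [InnerProductSpace ℝ E] [CompleteSpace E] {𝒳 : Type*} [MeasurableSpace 𝒳] {μ : Measure 𝒳}
    {f : E → 𝒳 → ℝ} {L : E → ℝ} {θ : E}
    (hf : ∀ᵐ x ∂μ, ∀ᶠ t in 𝓝 θ, 0 < f t x) (hL : ∀ᶠ t in 𝓝 θ, 0 < L t)
    (hLf : gradient L θ = ∫ x, gradient (fun t => f t x) θ ∂μ) :
    gradient (fun t => log (L t)) θ =
      ∫ x, (f θ x / L θ) • gradient (fun t => log (f t x)) θ ∂μ := by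
  rw [gradient_log_of_eventually_pos hL, hLf, ← integral_smul]
  refine integral_congr_ae (hf.mono fun x hx => ?_)
  dsimp only
  have hfx : f θ x ≠ 0 := hx.self_of_nhds.ne'
  rw [gradient_log_of_eventually_pos hx, smul_smul]
  congr 1
  field_simp

theorem em_fixed_point_is_stationary_general {p : ℕ}
    {𝒳 : Type*} [MeasurableSpace 𝒳] (μ : Measure 𝒳)
    (Θ : Set (EuclideanSpace ℝ (Fin p))) (hΘ : IsOpen Θ)
    (f_c : EuclideanSpace ℝ (Fin p) → 𝒳 → ℝ)
    (hpos : ∀ θ x, 0 < f_c θ x)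
    (L : EuclideanSpace ℝ (Fin p) → ℝ)
    (hLpos : ∀ θ ∈ Θ, 0 < L θ)
    (ell : EuclideanSpace ℝ (Fin p) → ℝ) (hell : ∀ θ, ell θ = Real.log (L θ))
    (f_m : EuclideanSpace ℝ (Fin p) → 𝒳 → ℝ)
    (hfm : ∀ θ x, f_m θ x = f_c θ x / L θ)
    (Q : EuclideanSpace ℝ (Fin p) → EuclideanSpace ℝ (Fin p) → ℝ)
    (hDUIL : ∀ θ ∈ Θ, gradient L θ = ∫ x, gradient (fun t => f_c t x) θ ∂μ)
    (θs : EuclideanSpace ℝ (Fin p)) (hθs : θs ∈ Θ)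
    (hDUIQ : ∀ t ∈ Θ, gradient (fun s => Q s θs) t =
      ∫ x, f_m θs x • gradient (fun s => Real.log (f_c s x)) t ∂μ)
    (hcrit : gradient (fun s => Q s θs) θs = 0) :
    gradient ell θs = 0 := by
  have hf_c_pos : ∀ᵐ x ∂μ, ∀ᶠ t in 𝓝 θs, 0 < f_c t x :=
    .of_forall fun x => .of_forall fun t => hpos t x
  have hL_pos : ∀ᶠ t in 𝓝 θs, 0 < L t :=
    eventually_of_mem (hΘ.mem_nhds hθs) hLpos
  rw [show ell = fun t => log (L t) from funext hell,
    gradient_log_eq_integral_div_smul_gradient_log hf_c_pos hL_pos (hDUIL θs hθs)]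
  simp_rw [← hfm]
  rw [← hDUIQ θs hθs, hcrit]

/-- Fixed points of EM are stationary points of the observed-data log-likelihood:
if θ* satisfies ∇_{θ'} Q(θ'|θ*)|_{θ'=θ*} = 0 (as holds at an interior maximizer of
Q(·|θ*), i.e., at a fixed point of the EM update), then ∇ℓ(θ*) = 0. -/
theorem em_fixed_point_is_stationary {p : ℕ}
    {𝒳 : Type*} [MeasurableSpace 𝒳] (μ : Measure 𝒳) [SigmaFinite μ]
    (Θ : Set (EuclideanSpace ℝ (Fin p))) (hΘ : IsOpen Θ)
    (f_c : EuclideanSpace ℝ (Fin p) → 𝒳 → ℝ)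
    (hpos : ∀ θ x, 0 < f_c θ x)
    (hmeas : ∀ θ, Measurable (f_c θ))
    (hint : ∀ θ ∈ Θ, Integrable (f_c θ) μ)
    (hsmooth : ∀ᵐ x ∂μ, ContDiffOn ℝ 1 (fun t => f_c t x) Θ)
    (L : EuclideanSpace ℝ (Fin p) → ℝ) (hL : ∀ θ, L θ = ∫ x, f_c θ x ∂μ)
    (hLpos : ∀ θ ∈ Θ, 0 < L θ)
    (ell : EuclideanSpace ℝ (Fin p) → ℝ) (hell : ∀ θ, ell θ = Real.log (L θ))
    (f_m : EuclideanSpace ℝ (Fin p) → 𝒳 → ℝ)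
    (hfm : ∀ θ x, f_m θ x = f_c θ x / L θ)
    (Q : EuclideanSpace ℝ (Fin p) → EuclideanSpace ℝ (Fin p) → ℝ)
    (hQ : ∀ θ' θ, Q θ' θ = ∫ x, Real.log (f_c θ' x) * f_m θ x ∂μ)
    (hDUIL : ∀ θ ∈ Θ, gradient L θ = ∫ x, gradient (fun t => f_c t x) θ ∂μ)
    (hintL : ∀ θ ∈ Θ, Integrable (fun x => gradient (fun t => f_c t x) θ) μ)
    (θs : EuclideanSpace ℝ (Fin p)) (hθs : θs ∈ Θ)
    (hDUIQ : ∀ t ∈ Θ, gradient (fun s => Q s θs) t =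
      ∫ x, f_m θs x • gradient (fun s => Real.log (f_c s x)) t ∂μ)
    (hintQ : ∀ t ∈ Θ, Integrable
      (fun x => f_m θs x • gradient (fun s => Real.log (f_c s x)) t) μ)
    (hdiffQ : DifferentiableAt ℝ (fun s => Q s θs) θs)
    (hcrit : gradient (fun s => Q s θs) θs = 0) :
    gradient ell θs = 0 :=
  em_fixed_point_is_stationary_general μ Θ hΘ f_c hpos L hLpos ell hell f_m hfm Q hDUIL θs hθs hDUIQ
    hcrit
end
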